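/- arXiv:2205.09336 — 4 statements merged into one kernel-verified Lean document; each statement's English description precedes it below -/
import Mathlib

section
/- Let A ⊆ ℝⁿ be a starshaped set whose kernel has nonempty interior. Then A is strictly starshaped: for any x ∈ int ker(A) and any boundary point y ∈ ∂A, the ray from x through y meets ∂A only at y. Equivalently, if x ∈ int ker(A) and two boundary points y₁, y₂ ∈ ∂A lie on the same ray from x (i.e. (y₁−x)/‖y₁−x‖ = (y₂−x)/‖y₂−x‖), then y₁ = y₂. -/
open Set

/-- Starshaped hull of `A` with respect to `x`: union of segments from `x` to points of `A`. -/
def starHull {n : ℕ} (x : EuclideanSpace ℝ (Fin n)) (A : Set (EuclideanSpace ℝ (Fin n))) :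
    Set (EuclideanSpace ℝ (Fin n)) := ⋃ y ∈ A, segment ℝ x y

/-- Kernel of a set: points seeing every point of the set. -/
def starKernel {n : ℕ} (A : Set (EuclideanSpace ℝ (Fin n))) :
    Set (EuclideanSpace ℝ (Fin n)) := {x | x ∈ A ∧ ∀ y ∈ A, segment ℝ x y ⊆ A}

/-- Admissible kernel of `A` excluding `X`. -/
def admKernel {n : ℕ} (A X : Set (EuclideanSpace ℝ (Fin n))) :
    Set (EuclideanSpace ℝ (Fin n)) := {x | starHull x A ∩ X = ∅}

/-- Starshaped hull of `A` with specified kernel `K`: the smallest set containing `A`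
whose kernel contains `K`. -/
def starHullKer {n : ℕ} (K A : Set (EuclideanSpace ℝ (Fin n))) :
    Set (EuclideanSpace ℝ (Fin n)) := ⋂₀ {S | A ⊆ S ∧ K ⊆ starKernel S}

lemma aux_openSeg {n : ℕ} {A : Set (EuclideanSpace ℝ (Fin n))} {x : EuclideanSpace ℝ (Fin n)}
    (hx : x ∈ interior (starKernel A)) {y z : EuclideanSpace ℝ (Fin n)}
    (hy : y ∈ closure A) (hz : z ∈ openSegment ℝ x y) : z ∈ interior A := by
  obtain ⟨ε, hε, hball⟩ := Metric.mem_nhds_iff.mp (mem_interior_iff_mem_nhds.mp hx)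
  obtain ⟨a, b, ha, hb, hab, hzeq⟩ := hz
  rw [mem_interior_iff_mem_nhds, Metric.mem_nhds_iff]
  refine ⟨a * ε / 2, by positivity, fun z' hz' => ?_⟩
  -- pick y'' ∈ A close to y
  obtain ⟨y'', hy''A, hy''⟩ := Metric.mem_closure_iff.mp hy (a * ε / (2 * b)) (by positivity)
  set x'' : EuclideanSpace ℝ (Fin n) := a⁻¹ • (z' - b • y'') with hx''def
  have hx''ball : x'' ∈ Metric.ball x ε := by
    have hxx : x'' - x = a⁻¹ • ((z' - z) + b • (y - y'')) := by
      have key : a • (x'' - x) = (z' - z) + b • (y - y'') := by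
        rw [hx''def, smul_sub, smul_smul, mul_inv_cancel₀ ha.ne', one_smul, ← hzeq]
        module
      rw [← key, smul_smul, inv_mul_cancel₀ ha.ne', one_smul]
    rw [Metric.mem_ball, dist_eq_norm, hxx]
    have h1 : ‖(z' - z) + b • (y - y'')‖ ≤ ‖z' - z‖ + b * ‖y - y''‖ := by
      calc ‖(z' - z) + b • (y - y'')‖ ≤ ‖z' - z‖ + ‖b • (y - y'')‖ := norm_add_le _ _
        _ = ‖z' - z‖ + b * ‖y - y''‖ := by rw [norm_smul, Real.norm_of_nonneg hb.le]
    have h2 : ‖z' - z‖ < a * ε / 2 := by rw [← dist_eq_norm]; exact hz'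
    have h3 : b * ‖y - y''‖ < a * ε / 2 := by
      have := hy''
      rw [dist_eq_norm] at this
      calc b * ‖y - y''‖ < b * (a * ε / (2 * b)) := by
            exact mul_lt_mul_of_pos_left this hb
        _ = a * ε / 2 := by field_simp
    rw [norm_smul, Real.norm_of_nonneg (inv_nonneg.mpr ha.le)]
    calc a⁻¹ * ‖(z' - z) + b • (y - y'')‖ ≤ a⁻¹ * (‖z' - z‖ + b * ‖y - y''‖) := by
          exact mul_le_mul_of_nonneg_left h1 (inv_nonneg.mpr ha.le)
      _ < a⁻¹ * (a * ε / 2 + a * ε / 2) := by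
          exact mul_lt_mul_of_pos_left (by linarith) (inv_pos.mpr ha)
      _ = ε := by field_simp; norm_num
  have hx''K : x'' ∈ starKernel A := hball hx''ball
  have : z' ∈ segment ℝ x'' y'' := by
    refine ⟨a, b, ha.le, hb.le, hab, ?_⟩
    rw [hx''def, smul_smul, mul_inv_cancel₀ ha.ne', one_smul]
    module
  exact hx''K.2 y'' hy''A this

/-- A starshaped set whose kernel has nonempty interior is strictly starshaped: two boundary
points on the same ray from a point `x` in the interior of the kernel coincide. -/
theorem statement6 {n : ℕ} (A : Set (EuclideanSpace ℝ (Fin n))) (x : EuclideanSpace ℝ (Fin n))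
    (hx : x ∈ interior (starKernel A)) (y₁ y₂ : EuclideanSpace ℝ (Fin n))
    (h₁ : y₁ ∈ frontier A) (h₂ : y₂ ∈ frontier A) (hy₁ : y₁ ≠ x) (hy₂ : y₂ ≠ x)
    (hdir : ‖y₁ - x‖⁻¹ • (y₁ - x) = ‖y₂ - x‖⁻¹ • (y₂ - x)) : y₁ = y₂ := by
  have hr₁ : (0:ℝ) < ‖y₁ - x‖ := norm_pos_iff.mpr (sub_ne_zero.mpr hy₁)
  have hr₂ : (0:ℝ) < ‖y₂ - x‖ := norm_pos_iff.mpr (sub_ne_zero.mpr hy₂)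
  have key : ∀ (u v : EuclideanSpace ℝ (Fin n)), u ∈ frontier A → v ∈ frontier A →
      ∀ c : ℝ, 0 < c → c < 1 → u - x = c • (v - x) → False := by
    intro u v hu hv c hc hc1 heq
    have hu' : u ∈ openSegment ℝ x v := by
      refine ⟨1 - c, c, by linarith, hc, by ring, ?_⟩
      have : u = x + c • (v - x) := by rw [← heq]; abel
      rw [this]; module
    have : u ∈ interior A := aux_openSeg hx hv.1 hu'
    exact hu.2 this
  -- y₁ - x = (‖y₁-x‖/‖y₂-x‖) • (y₂ - x)
  have heq : y₁ - x = (‖y₁ - x‖ * ‖y₂ - x‖⁻¹) • (y₂ - x) := by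
    have := congrArg (fun w => ‖y₁ - x‖ • w) hdir
    simpa [smul_smul, mul_inv_cancel₀ hr₁.ne', mul_comm] using this
  have heq' : y₂ - x = (‖y₂ - x‖ * ‖y₁ - x‖⁻¹) • (y₁ - x) := by
    have := congrArg (fun w => ‖y₂ - x‖ • w) hdir.symm
    simpa [smul_smul, mul_inv_cancel₀ hr₂.ne', mul_comm] using this
  rcases lt_trichotomy ‖y₁ - x‖ ‖y₂ - x‖ with h | h | h
  · exact absurd (key y₁ y₂ h₁ h₂ _ (by positivity)
      (by rw [← div_eq_mul_inv]; exact (div_lt_one hr₂).mpr h) heq) (fun f => f)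
  · have h12 : y₁ - x = y₂ - x := by
      rw [heq, h, mul_inv_cancel₀ hr₂.ne', one_smul]
    exact sub_left_inj.mp h12
  · exact absurd (key y₂ y₁ h₂ h₁ _ (by positivity)
      (by rw [← div_eq_mul_inv]; exact (div_lt_one hr₁).mpr h) heq') (fun f => f)
end

section
/- If A ⊆ ℝⁿ is starshaped with respect to x ∈ int ker(A), then for any point z lying strictly between x and a point y ∈ A (i.e. z ∈ [x,y], z ≠ x, z ≠ y) with y ∈ A, z is an interior point of A. -/
open Set

/-- If `x` is in the interior of the kernel of `A` and `z` lies strictly between `x` and a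
point `y ∈ A`, then `z` is an interior point of `A`. -/
theorem statement7 {n : ℕ} (A : Set (EuclideanSpace ℝ (Fin n))) (x : EuclideanSpace ℝ (Fin n))
    (hx : x ∈ interior (starKernel A)) (y : EuclideanSpace ℝ (Fin n)) (hy : y ∈ A)
    (z : EuclideanSpace ℝ (Fin n)) (hz : z ∈ segment ℝ x y) (hzx : z ≠ x) (hzy : z ≠ y) :
    z ∈ interior A := by

  obtain ⟨a, b, ha, hb, hab, hzdef⟩ := hz
  -- a > 0 : otherwise z = y ; b > 0 : otherwise z = x
  have ha' : 0 < a := by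
    rcases ha.lt_or_eq with h | h
    · exact h
    · exfalso; apply hzy
      have hb1 : b = 1 := by linarith
      rw [← hzdef, ← h, hb1]; simp
  have hb' : 0 < b := by
    rcases hb.lt_or_eq with h | h
    · exact h
    · exfalso; apply hzx
      have ha1 : a = 1 := by linarith
      rw [← hzdef, ← h, ha1]; simp
  obtain ⟨ε, hε, hball⟩ := Metric.isOpen_iff.mp isOpen_interior x hx
  have hball' : Metric.ball x ε ⊆ starKernel A := hball.trans interior_subset
  rw [mem_interior]
  refine ⟨Metric.ball z (a * ε), fun w hw => ?_, Metric.isOpen_ball, by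
    simpa using mul_pos ha' hε⟩
  set x' : EuclideanSpace ℝ (Fin n) := x + a⁻¹ • (w - z) with hx'def
  have hx' : x' ∈ Metric.ball x ε := by
    rw [Metric.mem_ball, dist_eq_norm]
    have : x' - x = a⁻¹ • (w - z) := by rw [hx'def]; abel
    rw [this, norm_smul, norm_inv, Real.norm_of_nonneg ha]
    rw [Metric.mem_ball, dist_eq_norm] at hw
    calc a⁻¹ * ‖w - z‖ < a⁻¹ * (a * ε) := by
          exact mul_lt_mul_of_pos_left hw (inv_pos.mpr ha')
      _ = ε := by field_simp
  have hk := hball' hx'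
  have hseg : w ∈ segment ℝ x' y := by
    refine ⟨a, b, ha, hb, hab, ?_⟩
    rw [hx'def, smul_add, smul_smul, mul_inv_cancel₀ (ne_of_gt ha'), one_smul]
    rw [← hzdef] at *
    abel
  exact hk.2 y hy hseg
end

section
/- For a set A ⊆ ℝⁿ and a point x̄ ∈ ℝⁿ, the admissible kernel ad ker(A, {x̄}) is nonempty if and only if x̄ ∉ A and there exists a direction v ≠ 0 such that the ray {x̄ + t v : t ≥ 0} does not intersect A (i.e. x̄ is a free exterior point of A). -/
open Set

lemma admKernel_singleton_mem {n : ℕ} (A : Set (EuclideanSpace ℝ (Fin n)))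
    (xb x : EuclideanSpace ℝ (Fin n)) :
    x ∈ admKernel A {xb} ↔ xb ∉ starHull x A := by
  simp only [admKernel, mem_setOf_eq, eq_empty_iff_forall_notMem]
  constructor
  · intro h hx; exact h xb ⟨hx, rfl⟩
  · rintro h z ⟨hz, rfl⟩; exact h hz

/-- The admissible kernel excluding a single point is nonempty iff the point is a free
exterior point of `A`. -/
theorem statement10 {n : ℕ} (hn : 0 < n) (A : Set (EuclideanSpace ℝ (Fin n)))
    (xb : EuclideanSpace ℝ (Fin n)) :
    (admKernel A {xb}).Nonempty ↔
      xb ∉ A ∧ ∃ v : EuclideanSpace ℝ (Fin n), v ≠ 0 ∧ ∀ t : ℝ, 0 ≤ t → xb + t • v ∉ A := by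
  constructor
  · rintro ⟨x, hx⟩
    rw [admKernel_singleton_mem] at hx
    have hxbA : xb ∉ A := by
      intro h
      exact hx (mem_biUnion h (right_mem_segment ℝ x xb))
    refine ⟨hxbA, ?_⟩
    rcases A.eq_empty_or_nonempty with hA | ⟨a, ha⟩
    · refine ⟨EuclideanSpace.single ⟨0, hn⟩ (1 : ℝ), ?_, by simp [hA]⟩
      intro h
      have := congrArg (fun w => w ⟨0, hn⟩) h
      simp [EuclideanSpace.single_apply] at this
    · have hxne : x ≠ xb := by
        rintro rfl
        exact hx (mem_biUnion ha (left_mem_segment ℝ x a))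
      refine ⟨xb - x, sub_ne_zero.mpr (Ne.symm hxne), ?_⟩
      intro t ht hmem
      apply hx
      refine mem_biUnion hmem ⟨t / (1 + t), 1 / (1 + t), ?_, ?_, ?_, ?_⟩
      · positivity
      · positivity
      · field_simp; ring
      · have h1t : (1 + t) ≠ 0 := by positivity
        rw [div_eq_mul_inv, div_eq_mul_inv]
        have : (t * (1 + t)⁻¹) • x + (1 * (1 + t)⁻¹) • (xb + t • (xb - x))
            = (1 + t)⁻¹ • (t • x + (xb + t • (xb - x))) := by
          rw [smul_add]; rw [mul_comm t, mul_comm 1]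
          simp [mul_smul]
        rw [this]
        have : t • x + (xb + t • (xb - x)) = (1 + t) • xb := by
          module
        rw [this, inv_smul_smul₀ h1t]
  · rintro ⟨hxbA, v, hv, hray⟩
    refine ⟨xb - v, ?_⟩
    rw [admKernel_singleton_mem]
    intro h
    rw [starHull, mem_iUnion₂] at h
    obtain ⟨y, hy, a, b, ha, hb, hab, heq⟩ := h
    rcases eq_or_lt_of_le hb with hb0 | hb0
    · have ha1 : a = 1 := by linarith
      rw [← hb0, ha1] at heq
      simp at heq
      exact hv heq
    · have hyA : y = xb + (a / b) • v := by
        have : b • y = xb - a • (xb - v) := by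
          linear_combination (norm := module) heq
        have hy' : y = b⁻¹ • (xb - a • (xb - v)) := by
          rw [← this, inv_smul_smul₀ hb0.ne']
        rw [hy']
        have hbx : xb - a • (xb - v) = b • xb + a • v := by
          rw [smul_sub]
          have : a • xb = (1 - b) • xb := by rw [show 1 - b = a by linarith]
          rw [this, sub_smul, one_smul]; abel
        rw [hbx, smul_add, inv_smul_smul₀ hb0.ne', div_eq_mul_inv, mul_comm, mul_smul]
      rw [hyA] at hy
      exact hray (a / b) (by positivity) hy
end

section
/- For a set A ⊆ ℝⁿ and a finite or arbitrary set K ⊆ ℝⁿ, the starshaped hull of A with specified kernel K satisfies SH_ker K(A) = SH_ker CH(K)(A) = ⋃_{k ∈ CH(K)} SH_k(A), where CH(K) is the convex hull of K. In particular, ⋃_{k∈CH(K)} SH_k(A) is a starshaped set containing A whose kernel contains CH(K). -/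
open Set

/-- The kernel of any set is convex. -/
lemma starKernel_convex {n : ℕ} (S : Set (EuclideanSpace ℝ (Fin n))) :
    Convex ℝ (starKernel S) := by
  rintro x hx y hy a b ha hb hab
  have hzS : a • x + b • y ∈ S := hx.2 y hy.1 ⟨a, b, ha, hb, hab, rfl⟩
  refine ⟨hzS, ?_⟩
  rintro s hs p ⟨c, d, hc, hd, hcd, rfl⟩
  by_cases he : c * b + d = 0
  · have hd0 : d = 0 := le_antisymm (by nlinarith [mul_nonneg hc hb]) hd
    have hcb : c * b = 0 := by linarith
    have hc1 : c = 1 := by linarith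
    have hb0 : b = 0 := by
      rcases mul_eq_zero.1 hcb with h | h
      · exfalso; rw [hc1] at h; norm_num at h
      · exact h
    have ha1 : a = 1 := by linarith
    have : c • (a • x + b • y) + d • s = x := by
      rw [hd0, hc1, ha1, hb0]; module
    rw [this]; exact hx.1
  · have hepos : 0 < c * b + d := lt_of_le_of_ne (by positivity) (Ne.symm he)
    set e := c * b + d with hedef
    have hq : (c * b / e) • y + (d / e) • s ∈ segment ℝ y s := by
      refine ⟨c * b / e, d / e, by positivity, by positivity, ?_, rfl⟩
      field_simp; exact hedef.symm
    have hqS : (c * b / e) • y + (d / e) • s ∈ S := hy.2 s hs hq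
    have hp : c • (a • x + b • y) + d • s
        = (c * a) • x + e • ((c * b / e) • y + (d / e) • s) := by
      match_scalars <;> field_simp <;> ring
    rw [hp]
    exact hx.2 _ hqS ⟨c * a, e, mul_nonneg hc ha, le_of_lt hepos, by nlinarith, rfl⟩

lemma A_subset_U {n : ℕ} (A K : Set (EuclideanSpace ℝ (Fin n))) (hK : K.Nonempty) :
    A ⊆ ⋃ k ∈ convexHull ℝ K, starHull k A := by
  intro a ha
  obtain ⟨k, hk⟩ := hK
  exact mem_biUnion (subset_convexHull ℝ K hk)
    (mem_biUnion ha (right_mem_segment ℝ k a))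

lemma CH_subset_kernel_U {n : ℕ} (A K : Set (EuclideanSpace ℝ (Fin n))) (hA : A.Nonempty) :
    convexHull ℝ K ⊆ starKernel (⋃ k ∈ convexHull ℝ K, starHull k A) := by
  intro k hk
  constructor
  · obtain ⟨a, ha⟩ := hA
    exact mem_biUnion hk (mem_biUnion ha (left_mem_segment ℝ k a))
  · intro u hu p hp
    obtain ⟨k', hk', hu'⟩ := mem_iUnion₂.1 hu
    obtain ⟨y, hy, hu''⟩ := mem_iUnion₂.1 hu'
    obtain ⟨e, f, he, hf, hef, rfl⟩ := hu''
    obtain ⟨c, d, hc, hd, hcd, rfl⟩ := hp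
    by_cases hg : c + d * e = 0
    · have hdf : d * f = 1 := by nlinarith [mul_nonneg hd he, mul_nonneg hd hf]
      have hc0 : c = 0 := by nlinarith [mul_nonneg hd he]
      have hde : d * e = 0 := by linarith
      have hpy : c • k + d • (e • k' + f • y) = y := by
        match_scalars <;> nlinarith
      rw [hpy]
      exact A_subset_U A K (convexHull_nonempty_iff.1 ⟨k, hk⟩) hy
    · have hgpos : 0 < c + d * e :=
        lt_of_le_of_ne (by positivity) (Ne.symm hg)
      set g := c + d * e with hgdef
      have hm : (c / g) • k + (d * e / g) • k' ∈ segment ℝ k k' :=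
        ⟨c / g, d * e / g, by positivity, by positivity, by field_simp; exact hgdef.symm, rfl⟩
      have hmCH : (c / g) • k + (d * e / g) • k' ∈ convexHull ℝ K :=
        (convex_convexHull ℝ K).segment_subset hk hk' hm
      have hseg : c • k + d • (e • k' + f • y)
          ∈ segment ℝ ((c / g) • k + (d * e / g) • k') y := by
        refine ⟨g, d * f, le_of_lt hgpos, mul_nonneg hd hf, by nlinarith, ?_⟩
        match_scalars <;> field_simp <;> ring
      exact mem_biUnion hmCH (mem_biUnion hy hseg)

lemma hullKer_eq_U {n : ℕ} (A K : Set (EuclideanSpace ℝ (Fin n)))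
    (hA : A.Nonempty) (hK : K.Nonempty) :
    starHullKer K A = ⋃ k ∈ convexHull ℝ K, starHull k A := by
  apply Subset.antisymm
  · exact sInter_subset_of_mem ⟨A_subset_U A K hK,
      (subset_convexHull ℝ K).trans (CH_subset_kernel_U A K hA)⟩
  · intro u hu
    rintro S ⟨hAS, hKS⟩
    have hCHS : convexHull ℝ K ⊆ starKernel S :=
      convexHull_min hKS (starKernel_convex S)
    obtain ⟨k, hk, hu'⟩ := mem_iUnion₂.1 hu
    obtain ⟨y, hy, hu''⟩ := mem_iUnion₂.1 hu'
    exact (hCHS hk).2 y (hAS hy) hu''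

/-- The starshaped hull with specified kernel `K` equals the one with specified kernel `CH(K)`
and equals the union of the starshaped hulls w.r.t. the points of `CH(K)`; moreover this union
is a starshaped set containing `A` whose kernel contains `CH(K)`. -/
theorem statement13 {n : ℕ} (A K : Set (EuclideanSpace ℝ (Fin n)))
    (hA : A.Nonempty) (hK : K.Nonempty) :
    starHullKer K A = starHullKer (convexHull ℝ K) A ∧
    starHullKer K A = ⋃ k ∈ convexHull ℝ K, starHull k A ∧
    A ⊆ ⋃ k ∈ convexHull ℝ K, starHull k A ∧
    convexHull ℝ K ⊆ starKernel (⋃ k ∈ convexHull ℝ K, starHull k A) := by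
  have hCHne : (convexHull ℝ K).Nonempty := hK.mono (subset_convexHull ℝ K)
  have h1 := hullKer_eq_U A K hA hK
  have h2 := hullKer_eq_U A (convexHull ℝ K) hA hCHne
  rw [(convex_convexHull ℝ K).convexHull_eq] at h2
  exact ⟨h1.trans h2.symm, h1, A_subset_U A K hK, CH_subset_kernel_U A K hA⟩
end
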